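/- arXiv:1009.3662 — 2 statements merged into one kernel-verified Lean document; each statement's English description precedes it below -/
import Mathlib

section
/- Let A be a commutative ring and let d be a nonzero integer. A Laurent polynomial f ∈ A[T,T⁻¹] satisfies the d-cocycle condition Δ(f) = f ⊗ 1 + (T^d ⊗ 1)·(1 ⊗ f) in A[T,T⁻¹] ⊗[A] A[T,T⁻¹] if and only if there exists a ∈ A such that f = a·(T^d − 1). (This is the case d ≠ 0 of Proposition A.1: every 1-cocycle of 𝔾ₘ over A with values in V_d is a coboundary, i.e. H¹(𝔾ₘ ⊗ A, V_d) = 0.) -/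
open LaurentPolynomial TensorProduct

/-!
Since `Δ (Tⁿ) = Tⁿ ⊗ Tⁿ`, the coefficient of `Tⁿ ⊗ Tᵐ` in `Δ f` is `fₙ` on the diagonal `n = m`
and `0` off it. Comparing these coefficients in the cocycle identity gives
`[n = m] fₙ = [m = 0] fₙ + [n = d] fₘ`: at `(n, n)` with `n ∉ {0, d}` this kills `fₙ`, and at
`(d, 0)` it gives `f₀ = -f_d` because `d ≠ 0`; hence `f = f_d (T^d - 1)`.
-/

namespace LaurentPolynomial

section CommSemiring

variable {A : Type*} [CommSemiring A]

noncomputable def lcoeff (n : ℤ) : A[T;T⁻¹] →ₗ[A] A :=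
  Finsupp.lapply n ∘ₗ (AddMonoidAlgebra.coeffLinearEquiv A).toLinearMap

noncomputable def coeff₂ (n m : ℤ) : A[T;T⁻¹] ⊗[A] A[T;T⁻¹] →ₗ[A] A :=
  LinearMap.mul' A A ∘ₗ TensorProduct.map (lcoeff n) (lcoeff m)

@[simp]
lemma coeff₂_tmul (n m : ℤ) (p q : A[T;T⁻¹]) : coeff₂ n m (p ⊗ₜ q) = p.coeff n * q.coeff m :=
  rfl

lemma coeff₂_apply_of_map_T (Δ : A[T;T⁻¹] →ₗ[A] A[T;T⁻¹] ⊗[A] A[T;T⁻¹])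
    (hΔ : ∀ n, Δ (T n) = T n ⊗ₜ T n) (f : A[T;T⁻¹]) (n m : ℤ) :
    coeff₂ n m (Δ f) = if n = m then f.coeff n else 0 := by
  induction f using LaurentPolynomial.induction_on' with
  | add p q hp hq => simp only [map_add, hp, hq, AddMonoidAlgebra.coeff_add]; split_ifs <;> simp
  | C_mul_T k a =>
    rw [← smul_eq_C_mul, map_smul, hΔ]
    simp only [map_smul, coeff₂_tmul, T_apply, mul_ite, mul_one, mul_zero, smul_eq_mul,
      AddMonoidAlgebra.coeff_smul, Finsupp.coe_smul, Pi.smul_apply]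
    split_ifs <;> simp_all

end CommSemiring

lemma eq_C_mul_T_sub_one {A : Type*} [CommRing A] {d : ℤ} (hd : d ≠ 0) {f : A[T;T⁻¹]}
    (h0 : f.coeff 0 = - f.coeff d) (hf : ∀ n, n ≠ 0 → n ≠ d → f.coeff n = 0) :
    f = C (f.coeff d) * (T d - 1) := by
  ext n
  rw [mul_sub, mul_one, ← smul_eq_C_mul]
  simp only [AddMonoidAlgebra.coeff_sub, AddMonoidAlgebra.coeff_smul, Finsupp.sub_apply,
    Finsupp.smul_apply, T_apply, C_apply, smul_eq_mul]
  rcases eq_or_ne n d with rfl | hnd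
  · simp [hd]
  rcases eq_or_ne n 0 with rfl | hn0
  · simp [hd, h0]
  · simp [hf n hn0 hnd, hn0, hnd.symm]

end LaurentPolynomial

/-- **Proposition A.1, case `d ≠ 0`** (Hain, "Remarks on Non-Abelian Cohomology of
Proalgebraic Groups"). Let `A` be a commutative ring and `Δ` the comultiplication on
`A[T,T⁻¹]`, i.e. the unique `A`-algebra homomorphism with `Δ(Tⁿ) = Tⁿ ⊗ Tⁿ`.
For `d ≠ 0`, a Laurent polynomial `f` satisfies the `d`-cocycle condition
`Δ(f) = f ⊗ 1 + (T^d ⊗ 1)·(1 ⊗ f)` if and only if `f = a·(T^d − 1)` for some `a ∈ A`;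
that is, every 1-cocycle of `𝔾ₘ ⊗ A` with values in `V_d` is a coboundary, so
`H¹(𝔾ₘ ⊗ A, V_d) = 0`. -/
theorem cocycle_iff_coboundary (A : Type*) [CommRing A] (d : ℤ) (hd : d ≠ 0)
    (Δ : LaurentPolynomial A →ₐ[A] TensorProduct A (LaurentPolynomial A) (LaurentPolynomial A))
    (hΔ : ∀ n : ℤ, Δ (T n) = T n ⊗ₜ[A] T n) (f : LaurentPolynomial A) :
    Δ f = f ⊗ₜ[A] (1 : LaurentPolynomial A) +
        ((T d : LaurentPolynomial A) ⊗ₜ[A] (1 : LaurentPolynomial A)) *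
          ((1 : LaurentPolynomial A) ⊗ₜ[A] f) ↔
      ∃ a : A, f = C a * (T d - 1) := by
  constructor
  · intro h
    have hcoeff (n m : ℤ) : (if n = m then f.coeff n else 0) =
        f.coeff n * (if 0 = m then 1 else 0) + (if d = n then 1 else 0) * f.coeff m := by
      rw [← coeff₂_apply_of_map_T Δ.toLinearMap hΔ, AlgHom.toLinearMap_apply, h,
        Algebra.TensorProduct.tmul_mul_tmul, mul_one, one_mul, map_add, ← T_zero,
        coeff₂_tmul, coeff₂_tmul, T_apply, T_apply]
    refine ⟨f.coeff d, eq_C_mul_T_sub_one hd ?_ fun n hn0 hnd => ?_⟩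
    · simpa [hd, eq_neg_iff_add_eq_zero, add_comm, eq_comm] using hcoeff d 0
    · simpa [Ne.symm hn0, Ne.symm hnd] using hcoeff n n
  · rintro ⟨a, rfl⟩
    rw [← smul_eq_C_mul, map_smul, ← smul_tmul', tmul_smul, mul_smul_comm, ← smul_add]
    congr 1
    rw [map_sub, map_one, hΔ, Algebra.TensorProduct.tmul_mul_tmul, mul_one, one_mul, sub_tmul,
      tmul_sub, Algebra.TensorProduct.one_def]
    abel
end

section
/- Let π : G → Q be a surjective group homomorphism with kernel U, and suppose there is a chain of subgroups U = U₁ ≥ U₂ ≥ ⋯ ≥ U_N ≥ U_{N+1} = {1} such that each Uᵢ is normal in G and the commutator subgroup satisfies [U, Uᵢ] ≤ U_{i+1} for 1 ≤ i ≤ N (so each quotient Uᵢ/U_{i+1} is abelian and the conjugation action of G on Uᵢ/U_{i+1} descends to an action of Q). Assume that for each i with 1 ≤ i ≤ N, every crossed homomorphism c : Q → Uᵢ/U_{i+1} (i.e. every map satisfying c(q₁q₂) = c(q₁)·(q₁ • c(q₂))) is principal (i.e. of the form c(q) = m·(q • m)⁻¹ for some fixed m ∈ Uᵢ/U_{i+1}).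 Then any two group-homomorphism sections s₀, s₁ : Q → G of π are conjugate by an element of U: there exists u ∈ U with s₁(q) = u·s₀(q)·u⁻¹ for all q ∈ Q. (This is the group-theoretic content of Corollary A.2, proved by induction on the length N of the central series.) -/
/-!
Induct down the series. Suppose `s₁` agrees modulo `Uᵢ` with the conjugate `t = u s₀ u⁻¹`,
`u ∈ U`. Then `q ↦ s₁ q (t q)⁻¹` is a crossed homomorphism into `Uᵢ/U_{i+1}`: it is one for
the action by `t`-conjugation, and since `t q` and `s₀ q` differ by an element of `U`, which acts
trivially on `Uᵢ/U_{i+1}`, also for the action by `s₀`-conjugation. It is therefore principal,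
`m (q • m)⁻¹`, and then `s₁` agrees modulo `U_{i+1}` with the conjugate by `m u`.
At `U_{N+1} = 1` the congruence is an equality.
-/

section

variable {G Q : Type*} [Group G] [Group Q]

/-- `H¹(Q, W/V) = 0`, stated through lifts to `G` of the cochains; `q` acts on `W/V` by
conjugation with `s₀ q`. -/
def CrossedHomsArePrincipal (s₀ : Q →* G) (W V : Subgroup G) : Prop :=
  ∀ c : Q → G, (∀ q, c q ∈ W) →
    (∀ q₁ q₂ : Q, (c (q₁ * q₂))⁻¹ * (c q₁ * (s₀ q₁ * c q₂ * (s₀ q₁)⁻¹)) ∈ V) →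
    ∃ m ∈ W, ∀ q : Q, (c q)⁻¹ * (m * (s₀ q * m⁻¹ * (s₀ q)⁻¹)) ∈ V

theorem QuotientGroup.mk_conj_eq_of_commutator_le {K W V : Subgroup G} [V.Normal]
    (h : ⁅K, W⁆ ≤ V) {k b : G} (hk : k ∈ K) (hb : b ∈ W) :
    ((k * b * k⁻¹ : G) : G ⧸ V) = b := by
  have hcomm : ((k * b * k⁻¹ * b⁻¹ : G) : G ⧸ V) = 1 :=
    (QuotientGroup.eq_one_iff _).mpr (h (Subgroup.commutator_mem_commutator hk hb))
  rw [← inv_mul_cancel_right (k * b * k⁻¹) b, QuotientGroup.mk_mul, hcomm, one_mul]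

theorem QuotientGroup.mk_conj_eq_of_map_eq (π : G →* Q) {W V : Subgroup G} [V.Normal]
    (h : ⁅π.ker, W⁆ ≤ V) {x y b : G} (hxy : π x = π y) (hb : b ∈ W) :
    ((x * b * x⁻¹ : G) : G ⧸ V) = (y * b * y⁻¹ : G) := by
  have hk : x⁻¹ * y ∈ π.ker := by simp [MonoidHom.mem_ker, hxy]
  have hy : y * b * y⁻¹ = x * ((x⁻¹ * y) * b * (x⁻¹ * y)⁻¹) * x⁻¹ := by group
  have hconj := QuotientGroup.mk_conj_eq_of_commutator_le (V := V) h hk hb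
  simp only [hy, QuotientGroup.mk_mul, QuotientGroup.mk_inv] at hconj ⊢
  rw [hconj]

theorem MonoidHom.mul_inv_map_mul (s t : Q →* G) (q₁ q₂ : Q) :
    s (q₁ * q₂) * (t (q₁ * q₂))⁻¹ =
      s q₁ * (t q₁)⁻¹ * (t q₁ * (s q₂ * (t q₂)⁻¹) * (t q₁)⁻¹) := by
  simp only [map_mul]; group

theorem exists_conj_mod_of_conj_mod (π : G →* Q) {W V : Subgroup G} [V.Normal]
    (hWK : W ≤ π.ker) (hcomm : ⁅π.ker, W⁆ ≤ V) {s₀ s₁ : Q →* G}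
    (hH1 : CrossedHomsArePrincipal s₀ W V) {u : G} (hu : u ∈ π.ker)
    (hs : ∀ q, s₁ q * (u * s₀ q * u⁻¹)⁻¹ ∈ W) :
    ∃ v ∈ π.ker, ∀ q, s₁ q * (v * s₀ q * v⁻¹)⁻¹ ∈ V := by
  set t : Q →* G := (MulAut.conj u).toMonoidHom.comp s₀
  have ht : ∀ q, t q = u * s₀ q * u⁻¹ := fun _ => rfl
  set c : Q → G := fun q => s₁ q * (t q)⁻¹
  have hc : ∀ q, c q ∈ W := hs
  have hconj : ∀ q, ∀ b ∈ W,
      ((t q * b * (t q)⁻¹ : G) : G ⧸ V) = (s₀ q * b * (s₀ q)⁻¹ : G) := fun q b hb =>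
    QuotientGroup.mk_conj_eq_of_map_eq π hcomm (by simp [ht, MonoidHom.mem_ker.mp hu]) hb
  have hcross : ∀ q₁ q₂ : Q,
      (c (q₁ * q₂))⁻¹ * (c q₁ * (s₀ q₁ * c q₂ * (s₀ q₁)⁻¹)) ∈ V := fun q₁ q₂ => by
    have hc_mul : c (q₁ * q₂) = c q₁ * (t q₁ * c q₂ * (t q₁)⁻¹) :=
      MonoidHom.mul_inv_map_mul s₁ t q₁ q₂
    rw [← QuotientGroup.eq, hc_mul, QuotientGroup.mk_mul V (c q₁),
      QuotientGroup.mk_mul V (c q₁), hconj q₁ _ (hc q₂)]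
  obtain ⟨m, hm, hmc⟩ := hH1 c hc hcross
  refine ⟨m * u, mul_mem (hWK hm) hu, fun q => ?_⟩
  rw [← div_eq_mul_inv, ← QuotientGroup.eq_iff_div_mem]
  calc ((s₁ q : G) : G ⧸ V) = (c q : G ⧸ V) * (t q : G ⧸ V) := by
        rw [← QuotientGroup.mk_mul, inv_mul_cancel_right]
    _ = (m : G ⧸ V) * (s₀ q * m⁻¹ * (s₀ q)⁻¹ : G) * (t q : G ⧸ V) := by
        rw [QuotientGroup.eq.mpr (hmc q), QuotientGroup.mk_mul]
    _ = (m : G ⧸ V) * (t q * m⁻¹ * (t q)⁻¹ : G) * (t q : G ⧸ V) := by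
        rw [hconj q _ (inv_mem hm)]
    _ = (m * u * s₀ q * (m * u)⁻¹ : G) := by
        rw [← QuotientGroup.mk_mul, ← QuotientGroup.mk_mul, ht]; group

end

theorem sections_conjugate_of_central_series_general {G Q : Type*} [Group G] [Group Q]
    (π : G →* Q)
    (N : ℕ) (U : ℕ → Subgroup G)
    (hU1 : U 1 = π.ker) (hUtop : U (N + 1) = ⊥)
    (hchain : ∀ i, 1 ≤ i → i ≤ N → U (i + 1) ≤ U i)
    (hnormal : ∀ i, 1 ≤ i → i ≤ N → (U i).Normal)
    (hcomm : ∀ i, 1 ≤ i → i ≤ N → ⁅π.ker, U i⁆ ≤ U (i + 1))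
    (s₀ s₁ : Q →* G) (hs₀ : ∀ q, π (s₀ q) = q) (hs₁ : ∀ q, π (s₁ q) = q)
    (hH1 : ∀ i, 1 ≤ i → i ≤ N →
      ∀ c : Q → G, (∀ q, c q ∈ U i) →
        (∀ q₁ q₂ : Q,
            (c (q₁ * q₂))⁻¹ * (c q₁ * (s₀ q₁ * c q₂ * (s₀ q₁)⁻¹)) ∈ U (i + 1)) →
        ∃ m ∈ U i, ∀ q : Q,
            (c q)⁻¹ * (m * (s₀ q * m⁻¹ * (s₀ q)⁻¹)) ∈ U (i + 1)) :
    ∃ u ∈ π.ker, ∀ q : Q, s₁ q = u * s₀ q * u⁻¹ := by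
  have hker : ∀ i, 1 ≤ i → i ≤ N → U i ≤ π.ker := by
    intro i hi
    induction i, hi using Nat.le_induction with
    | base => exact fun _ => hU1.le
    | succ i hi ih => exact fun hiN => (hchain i hi (by omega)).trans (ih (by omega))
  have hnormal_succ : ∀ i ≤ N, (U (i + 1)).Normal := by
    intro i hi
    rcases hi.lt_or_eq with hi | rfl
    · exact hnormal (i + 1) (by omega) hi
    · rw [hUtop]; infer_instance
  have hconj_mod : ∀ j ≤ N, ∃ u ∈ π.ker, ∀ q, s₁ q * (u * s₀ q * u⁻¹)⁻¹ ∈ U (j + 1) := by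
    intro j hj
    induction j with
    | zero => exact ⟨1, one_mem _, fun q => by simp [hU1, hs₀, hs₁]⟩
    | succ j ih =>
      obtain ⟨u, hu, hs⟩ := ih (by omega)
      have := hnormal_succ (j + 1) hj
      exact exists_conj_mod_of_conj_mod π (hker _ (by omega) hj) (hcomm _ (by omega) hj)
        (hH1 _ (by omega) hj) hu hs
  obtain ⟨u, hu, hs⟩ := hconj_mod N le_rfl
  exact ⟨u, hu, fun q => mul_inv_eq_one.mp (by simpa only [hUtop, Subgroup.mem_bot] using hs q)⟩

/-- **Corollary A.2, group-theoretic form** (Hain, "Remarks on Non-Abelian Cohomology of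
Proalgebraic Groups"). Let `π : G → Q` be a surjective group homomorphism with kernel
`U = ker π`, and suppose there is a chain of subgroups
`U = U₁ ≥ U₂ ≥ ⋯ ≥ U_N ≥ U_{N+1} = 1`, each normal in `G`, with `[U, Uᵢ] ≤ U_{i+1}`
for `1 ≤ i ≤ N` (so each `Uᵢ/U_{i+1}` is abelian and carries a conjugation action of `Q`).
Assume that for each `1 ≤ i ≤ N` every crossed homomorphism `c : Q → Uᵢ/U_{i+1}` is
principal; here this is phrased at the level of `G`: any `c : Q → G` with values in `Uᵢ`
satisfying the crossed-homomorphism identity modulo `U_{i+1}` (with `q` acting by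
conjugation through the section `s₀`, a legitimate representative since `U` acts
trivially on `Uᵢ/U_{i+1}`) agrees modulo `U_{i+1}` with a principal one.
Then any two homomorphic sections `s₀, s₁ : Q → G` of `π` are conjugate by an element
of `U`. -/
theorem sections_conjugate_of_central_series {G Q : Type*} [Group G] [Group Q]
    (π : G →* Q) (hπ : Function.Surjective π)
    (N : ℕ) (hN : 1 ≤ N) (U : ℕ → Subgroup G)
    (hU1 : U 1 = π.ker) (hUtop : U (N + 1) = ⊥)
    (hchain : ∀ i, 1 ≤ i → i ≤ N → U (i + 1) ≤ U i)
    (hnormal : ∀ i, 1 ≤ i → i ≤ N → (U i).Normal)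
    (hcomm : ∀ i, 1 ≤ i → i ≤ N → ⁅π.ker, U i⁆ ≤ U (i + 1))
    (s₀ s₁ : Q →* G) (hs₀ : ∀ q, π (s₀ q) = q) (hs₁ : ∀ q, π (s₁ q) = q)
    (hH1 : ∀ i, 1 ≤ i → i ≤ N →
      ∀ c : Q → G, (∀ q, c q ∈ U i) →
        (∀ q₁ q₂ : Q,
            (c (q₁ * q₂))⁻¹ * (c q₁ * (s₀ q₁ * c q₂ * (s₀ q₁)⁻¹)) ∈ U (i + 1)) →
        ∃ m ∈ U i, ∀ q : Q,
            (c q)⁻¹ * (m * (s₀ q * m⁻¹ * (s₀ q)⁻¹)) ∈ U (i + 1)) :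
    ∃ u ∈ π.ker, ∀ q : Q, s₁ q = u * s₀ q * u⁻¹ :=
  sections_conjugate_of_central_series_general π N U hU1 hUtop hchain hnormal hcomm s₀ s₁ hs₀ hs₁
    hH1
end
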